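/- Let f be a transcendental entire function, let R > 0 be such that M(r, f) > r for all r ≥ R, and suppose that A_R(f) is a spider's web. Let (H_n)_{n≥0} and (L_n)_{n≥0} be the sequences of fundamental holes and loops for A_R(f). If L ∈ ℤ and G is a connected component of the complement of A_R^L(f), then for all sufficiently large n ∈ ℕ (in particular with n + L ≥ 0), f^n(G) = H_{n+L} and f^n(∂G) = L_{n+L}. -/

import Mathlib

open Set Metric Topology Function Bornology

/-- The maximum modulus `M(r, f)` of `f` on the circle `|z| = r`. -/
noncomputable def maxMod (f : ℂ → ℂ) (r : ℝ) : ℝ :=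
  sSup ((fun z => ‖f z‖) '' Metric.sphere (0 : ℂ) r)

/-- `f` is a transcendental entire function: holomorphic on all of `ℂ` and not a polynomial. -/
def TranscEntire (f : ℂ → ℂ) : Prop :=
  Differentiable ℂ f ∧ ¬ ∃ p : Polynomial ℂ, ∀ z, f z = p.eval z

/-- The fast escaping set `A(f)` (with parameter `R`). -/
def fastEscaping (f : ℂ → ℂ) (R : ℝ) : Set ℂ :=
  {z | ∃ L : ℕ, ∀ n : ℕ, (maxMod f)^[n] R ≤ ‖f^[n + L] z‖}

/-- The `L`-th level `A_R^L(f)` of the fast escaping set. -/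
def levelSet (f : ℂ → ℂ) (R : ℝ) (L : ℤ) : Set ℂ :=
  {z | ∀ n : ℕ, 0 ≤ (n : ℤ) + L →
    (maxMod f)^[((n : ℤ) + L).toNat] R ≤ ‖f^[n] z‖}

/-- `E ⊆ ℂ` is an (infinite) spider's web. -/
def SpidersWeb (E : Set ℂ) : Prop :=
  IsConnected E ∧ ∃ G : ℕ → Set ℂ,
    (∀ n, IsOpen (G n) ∧ IsConnected (G n) ∧ Bornology.IsBounded (G n) ∧
      SimplyConnectedSpace (G n) ∧ G n ⊆ G (n + 1) ∧ frontier (G n) ⊆ E) ∧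
    (⋃ n, G n) = Set.univ

/-- `K` is a connected component of the set `S`. -/
def IsCompOf {X : Type*} [TopologicalSpace X] (K S : Set X) : Prop :=
  ∃ z ∈ S, K = connectedComponentIn S z

/-- The `n`-th fundamental hole for `A_R(f)`: the component of the complement of
`A_R^n(f)` containing `0`. -/
noncomputable def fundHole (f : ℂ → ℂ) (R : ℝ) (n : ℤ) : Set ℂ :=
  connectedComponentIn (levelSet f R n)ᶜ 0

/-- The `n`-th fundamental loop for `A_R(f)`. -/
noncomputable def fundLoop (f : ℂ → ℂ) (R : ℝ) (n : ℤ) : Set ℂ :=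
  frontier (fundHole f R n)

/-!
Let `G` be the component of `A_R^L(f)ᶜ` containing `z`. By the strict maximum modulus principle
`f` maps `A_R^m(f)ᶜ` into `A_R^{m+1}(f)ᶜ`, while trivially `f(A_R^m(f)) ⊆ A_R^{m+1}(f)`. As
`z ∉ A_R^L(f)`, eventually `|f^n(z)| < M^{n+L}(R)`, and the disc `|w| < M^{n+L}(R)` lies in
`H_{n+L}`. The web makes `G` bounded: since `f^{L⁺}` has dense range (Liouville), `G` meets
`f^{L⁺}(G_k)` for some domain `G_k` of the web, and the frontier of this bounded open set lies in
`A_R^L(f)`, so it contains `G`. Hence `f^n(G)` is a bounded open connected subset of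
`A_R^{n+L}(f)ᶜ` meeting `H_{n+L}` with frontier `f^n(∂G) ⊆ A_R^{n+L}(f)`, that is,
`f^n(G) = H_{n+L}`.
-/

section Topology

variable {X Y : Type*} [TopologicalSpace X] [TopologicalSpace Y]

theorem IsOpenMap.iterate {f : X → X} (hf : IsOpenMap f) : ∀ n : ℕ, IsOpenMap f^[n]
  | 0 => IsOpenMap.id
  | n + 1 => (hf.iterate n).comp hf

theorem DenseRange.iterate {f : X → X} (hf : DenseRange f) (hc : Continuous f) :
    ∀ n : ℕ, DenseRange f^[n]
  | 0 => denseRange_id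
  | n + 1 => (hf.iterate hc n).comp hf (hc.iterate n)

theorem IsPreconnected.subset_of_disjoint_frontier {s u : Set X} (hs : IsPreconnected s)
    (hu : IsOpen u) (hsu : (s ∩ u).Nonempty) (hd : Disjoint s (frontier u)) : s ⊆ u :=
  hs.subset_of_closure_inter_subset hu hsu fun x ⟨hxc, hxs⟩ => by
    by_contra hxu
    exact disjoint_left.1 hd hxs ⟨hxc, by rwa [hu.interior_eq]⟩

theorem connectedComponentIn_eq_of_frontier_subset {S W : Set X} {x : X}
    (hWc : IsPreconnected W) (hWo : IsOpen W) (hWS : W ⊆ S) (hfr : frontier W ⊆ Sᶜ)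
    (hx : x ∈ W) : connectedComponentIn S x = W :=
  (isPreconnected_connectedComponentIn.subset_of_disjoint_frontier hWo
      ⟨x, mem_connectedComponentIn (hWS hx), hx⟩
      ((disjoint_compl_right.mono_right hfr).mono_left (connectedComponentIn_subset _ _))).antisymm
    (hWc.subset_connectedComponentIn hx hWS)

theorem frontier_connectedComponentIn_subset [LocallyConnectedSpace X] {U : Set X}
    (hU : IsOpen U) (x : X) : frontier (connectedComponentIn U x) ⊆ Uᶜ := by
  intro y hy hyU
  obtain ⟨g, hgy, hgx⟩ := mem_closure_iff.1 hy.1 _ hU.connectedComponentIn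
    (mem_connectedComponentIn hyU)
  refine hy.2 ?_
  rw [hU.connectedComponentIn.interior_eq, connectedComponentIn_eq hgx,
    ← connectedComponentIn_eq hgy]
  exact mem_connectedComponentIn hyU

section Image

variable [T2Space Y] {g : X → Y} {U : Set X}

theorem frontier_image_subset_image_frontier (hg : Continuous g) (hU : IsCompact (closure U))
    (ho : IsOpen (g '' U)) : frontier (g '' U) ⊆ g '' frontier U := by
  intro y hy
  have hcl : closure (g '' U) ⊆ g '' closure U :=
    closure_minimal (image_mono subset_closure) (hU.image hg).isClosed
  obtain ⟨x, hx, rfl⟩ := hcl hy.1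
  have hxU : x ∉ U := fun hxU => hy.2 (by rw [ho.interior_eq]; exact mem_image_of_mem g hxU)
  exact ⟨x, ⟨hx, fun hxi => hxU (interior_subset hxi)⟩, rfl⟩

theorem frontier_image_eq_image_frontier (hg : Continuous g) (hU : IsCompact (closure U))
    (ho : IsOpen (g '' U)) (hd : Disjoint (g '' frontier U) (g '' U)) :
    frontier (g '' U) = g '' frontier U := by
  refine (frontier_image_subset_image_frontier hg hU ho).antisymm ?_
  rintro _ ⟨x, hx, rfl⟩
  refine ⟨image_closure_subset_closure_image hg (mem_image_of_mem g hx.1), ?_⟩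
  rw [ho.interior_eq]
  exact disjoint_left.1 hd (mem_image_of_mem g hx)

end Image

end Topology

theorem monotone_iterate_apply_of_forall_le_map {α : Type*} [Preorder α] {φ : α → α} {a : α}
    (h : ∀ r, a ≤ r → r ≤ φ r) : Monotone fun n => φ^[n] a := by
  have ha : ∀ n, a ≤ φ^[n] a := fun n =>
    Nat.rec le_rfl (fun n ih => ih.trans (by rw [iterate_succ_apply']; exact h _ ih)) n
  exact monotone_nat_of_le_succ fun n => by rw [iterate_succ_apply']; exact h _ (ha n)

section EntireFunction

variable {f : ℂ → ℂ}

theorem TranscEntire.not_const (hf : TranscEntire f) : ¬ ∃ w, ∀ z, f z = w :=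
  fun ⟨w, hw⟩ => hf.2 ⟨Polynomial.C w, by simp [hw]⟩

variable (hd : Differentiable ℂ f)
include hd

theorem norm_le_maxMod {r : ℝ} {z : ℂ} (hz : ‖z‖ ≤ r) : ‖f z‖ ≤ maxMod f r := by
  have hbdd : BddAbove ((fun z => ‖f z‖) '' sphere 0 r) :=
    ((isCompact_sphere 0 r).image hd.continuous.norm).bddAbove
  rcases hz.eq_or_lt with hz | hz
  · exact le_csSup hbdd ⟨z, by simpa using hz, rfl⟩
  · refine Complex.norm_le_of_forall_mem_frontier_norm_le isBounded_ball hd.diffContOnCl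
      (fun w hw => le_csSup hbdd ⟨w, ?_, rfl⟩) (subset_closure (mem_ball_zero_iff.2 hz))
    rwa [frontier_ball 0 ((norm_nonneg z).trans_lt hz).ne'] at hw

variable (hnc : ¬ ∃ w, ∀ z, f z = w)
include hnc

theorem norm_lt_maxMod {r : ℝ} {z : ℂ} (hz : ‖z‖ < r) : ‖f z‖ < maxMod f r := by
  by_contra! h
  have hmax : IsLocalMax (norm ∘ f) z :=
    Filter.mem_of_superset (isOpen_ball.mem_nhds (mem_ball_zero_iff.2 hz)) fun w hw =>
      (norm_le_maxMod hd (mem_ball_zero_iff.1 hw).le).trans h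
  have hloc := Complex.eventually_eq_of_isLocalMax_norm (.of_forall fun w => hd w) hmax
  exact hnc ⟨f z, fun y => (hd.differentiableOn.analyticOnNhd isOpen_univ)
    |>.eqOn_of_preconnected_of_eventuallyEq analyticOnNhd_const isPreconnected_univ (mem_univ z)
      hloc (mem_univ y)⟩

theorem Differentiable.isOpenMap : IsOpenMap f :=
  ((hd.differentiableOn.analyticOnNhd isOpen_univ).is_constant_or_isOpenMap).resolve_left hnc

/-- Liouville's theorem applied to `(f - w)⁻¹`. -/
theorem Differentiable.denseRange : DenseRange f := by
  intro w
  rw [Metric.mem_closure_iff]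
  by_contra! hfar
  obtain ⟨ε, hε, hfar⟩ := hfar
  have hne : ∀ z, f z - w ≠ 0 := fun z h => by
    have := hfar _ ⟨z, rfl⟩
    rw [dist_comm, dist_eq_norm, h, norm_zero] at this
    linarith
  obtain ⟨c, hc⟩ := ((hd.sub_const w).inv hne).exists_const_forall_eq_of_bounded <| by
    rw [isBounded_iff_forall_norm_le]
    refine ⟨ε⁻¹, ?_⟩
    rintro _ ⟨z, rfl⟩
    rw [Pi.inv_apply, norm_inv, ← dist_eq_norm, dist_comm]
    exact inv_anti₀ hε (hfar _ ⟨z, rfl⟩)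
  exact hnc ⟨w + c⁻¹, fun z => by rw [← hc z, Pi.inv_apply, inv_inv]; ring⟩

end EntireFunction

section LevelSet

variable {f : ℂ → ℂ} {R : ℝ}

theorem levelSet_anti (hM : ∀ r ≥ R, r < maxMod f r) {L₁ L₂ : ℤ} (h : L₁ ≤ L₂) :
    levelSet f R L₂ ⊆ levelSet f R L₁ := fun z hz n hn =>
  (monotone_iterate_apply_of_forall_le_map (fun r hr => (hM r hr).le)
    (Int.toNat_le_toNat (by omega))).trans (hz n (by omega))

theorem isClosed_levelSet (hc : Continuous f) (L : ℤ) : IsClosed (levelSet f R L) := by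
  simp only [levelSet, ofPred_forall]
  exact isClosed_iInter fun n => isClosed_iInter fun _ =>
    isClosed_le continuous_const (hc.iterate n).norm

theorem iterate_mem_levelSet {L : ℤ} {z : ℂ} (hz : z ∈ levelSet f R L) (k : ℕ) :
    f^[k] z ∈ levelSet f R (L + k) := fun n hn => by
  have h := hz (n + k) (by omega)
  rwa [iterate_add_apply, show ((n + k : ℕ) : ℤ) + L = n + (L + k) by omega] at h

theorem ball_subset_compl_levelSet {L : ℤ} (hL : 0 ≤ L) :
    ball 0 ((maxMod f)^[L.toNat] R) ⊆ (levelSet f R L)ᶜ := fun z hz hzL => by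
  have h := hzL 0 (by omega)
  rw [Nat.cast_zero, zero_add, iterate_zero_apply] at h
  exact (mem_ball_zero_iff.1 hz).not_ge h

theorem fundHole_eq_connectedComponentIn {L : ℤ} (hL : 0 ≤ L) {w : ℂ}
    (hw : ‖w‖ < (maxMod f)^[L.toNat] R) :
    fundHole f R L = connectedComponentIn (levelSet f R L)ᶜ w :=
  (connectedComponentIn_eq <| (convex_ball (0 : ℂ) _).isPreconnected.subset_connectedComponentIn
    (mem_ball_zero_iff.2 hw) (ball_subset_compl_levelSet hL)
    (mem_ball_self ((norm_nonneg w).trans_lt hw))).symm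

variable (hd : Differentiable ℂ f) (hnc : ¬ ∃ w, ∀ z, f z = w)
include hd hnc

theorem exists_forall_norm_iterate_lt {L : ℤ} {z : ℂ} (hz : z ∉ levelSet f R L) :
    ∃ N : ℕ, ∀ n ≥ N,
      0 ≤ (n : ℤ) + L ∧ ‖f^[n] z‖ < (maxMod f)^[((n : ℤ) + L).toNat] R := by
  simp only [levelSet, mem_ofPred_eq, not_forall, not_le] at hz
  obtain ⟨N, hNL, hN⟩ := hz
  refine ⟨N, fun n hn => ?_⟩
  induction n, hn using Nat.le_induction with
  | base => exact ⟨hNL, hN⟩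
  | succ n hn ih =>
    refine ⟨by omega, ?_⟩
    rw [iterate_succ_apply', show ((n + 1 : ℕ) + L).toNat = ((n : ℤ) + L).toNat + 1 by omega,
      iterate_succ_apply']
    exact norm_lt_maxMod hd hnc ih.2

theorem iterate_notMem_levelSet {L : ℤ} {z : ℂ} (hz : z ∉ levelSet f R L) (k : ℕ) :
    f^[k] z ∉ levelSet f R (L + k) := fun hk => by
  obtain ⟨N, hN⟩ := exists_forall_norm_iterate_lt hd hnc hz
  have hlt := (hN (N + k) (by omega)).2
  have hle := hk N (by have := (hN N le_rfl).1; omega)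
  rw [iterate_add_apply, show ((N + k : ℕ) : ℤ) + L = N + (L + k) by omega] at hlt
  exact hlt.not_ge hle

end LevelSet

section SpidersWeb

variable {f : ℂ → ℂ} {R : ℝ} (hd : Differentiable ℂ f) (hnc : ¬ ∃ w, ∀ z, f z = w)
  (hM : ∀ r ≥ R, r < maxMod f r) (hweb : SpidersWeb (levelSet f R 0))
include hd hnc hM hweb

/-- The set `V` is `f^[L.toNat] '' G_k` for a domain `G_k` of the web. -/
theorem exists_isBounded_isOpen_frontier_subset_levelSet (L : ℤ) {W : Set ℂ} (hWo : IsOpen W)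
    (hWne : W.Nonempty) :
    ∃ V : Set ℂ,
      IsBounded V ∧ IsOpen V ∧ frontier V ⊆ levelSet f R L ∧ (W ∩ V).Nonempty := by
  obtain ⟨-, G, hG, hcover⟩ := hweb
  set k := L.toNat
  have hck : Continuous f^[k] := hd.continuous.iterate k
  obtain ⟨u, hu⟩ :=
    ((hd.denseRange hnc).iterate hd.continuous k).exists_mem_open hWo hWne
  obtain ⟨j, hj⟩ := mem_iUnion.1 (hcover ▸ mem_univ u)
  obtain ⟨hGo, -, hGb, -, -, hGfr⟩ := hG j
  have hVo : IsOpen (f^[k] '' G j) := (hd.isOpenMap hnc).iterate k _ hGo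
  refine ⟨_, ((hGb.isCompact_closure.image hck).isBounded).subset (image_mono subset_closure),
    hVo, (frontier_image_subset_image_frontier hck hGb.isCompact_closure hVo).trans ?_,
    ⟨_, hu, u, hj, rfl⟩⟩
  rintro _ ⟨x, hx, rfl⟩
  have hxk := iterate_mem_levelSet (hGfr hx) k
  rw [zero_add] at hxk
  exact levelSet_anti hM (Int.self_le_toNat L) hxk

theorem isBounded_connectedComponentIn_compl_levelSet (L : ℤ) (z : ℂ) :
    IsBounded (connectedComponentIn (levelSet f R L)ᶜ z) := by
  set C := connectedComponentIn (levelSet f R L)ᶜ z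
  rcases C.eq_empty_or_nonempty with hC | hC
  · rw [hC]; exact isBounded_empty
  have hCo : IsOpen C := (isClosed_levelSet hd.continuous L).isOpen_compl.connectedComponentIn
  obtain ⟨V, hVb, hVo, hVfr, hCV⟩ :=
    exists_isBounded_isOpen_frontier_subset_levelSet hd hnc hM hweb L hCo hC
  exact hVb.subset <| isPreconnected_connectedComponentIn.subset_of_disjoint_frontier hVo hCV
    ((disjoint_compl_left.mono_right hVfr).mono_left (connectedComponentIn_subset _ _))

end SpidersWeb

theorem image_iterate_connectedComponentIn_compl_levelSet {f : ℂ → ℂ} {R : ℝ}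
    (hd : Differentiable ℂ f) (hnc : ¬ ∃ w, ∀ z, f z = w) {L : ℤ} {z : ℂ}
    (hz : z ∉ levelSet f R L) (hb : IsBounded (connectedComponentIn (levelSet f R L)ᶜ z))
    {n : ℕ} (hn : 0 ≤ (n : ℤ) + L)
    (hlt : ‖f^[n] z‖ < (maxMod f)^[((n : ℤ) + L).toNat] R) :
    f^[n] '' connectedComponentIn (levelSet f R L)ᶜ z = fundHole f R (n + L) ∧
      f^[n] '' frontier (connectedComponentIn (levelSet f R L)ᶜ z) = fundLoop f R (n + L) := by
  set C := connectedComponentIn (levelSet f R L)ᶜ z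
  have hcn : Continuous f^[n] := hd.continuous.iterate n
  have hLo : IsOpen (levelSet f R L)ᶜ := (isClosed_levelSet hd.continuous L).isOpen_compl
  have hWo : IsOpen (f^[n] '' C) := (hd.isOpenMap hnc).iterate n _ hLo.connectedComponentIn
  have hWsub : f^[n] '' C ⊆ (levelSet f R (n + L))ᶜ := by
    rintro _ ⟨x, hx, rfl⟩
    rw [add_comm]
    exact iterate_notMem_levelSet hd hnc (connectedComponentIn_subset _ _ hx) n
  have hfrsub : f^[n] '' frontier C ⊆ levelSet f R (n + L) := by
    rintro _ ⟨x, hx, rfl⟩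
    rw [add_comm]
    exact iterate_mem_levelSet (compl_compl (levelSet f R L) ▸
      frontier_connectedComponentIn_subset hLo z hx) n
  have hfr : frontier (f^[n] '' C) = f^[n] '' frontier C :=
    frontier_image_eq_image_frontier hcn hb.isCompact_closure hWo
      (disjoint_compl_right.mono hfrsub hWsub)
  have hhole : f^[n] '' C = fundHole f R (n + L) := by
    rw [fundHole_eq_connectedComponentIn hn hlt, connectedComponentIn_eq_of_frontier_subset
      (isPreconnected_connectedComponentIn.image _ hcn.continuousOn) hWo hWsub
      (by rw [hfr, compl_compl]; exact hfrsub) ⟨z, mem_connectedComponentIn hz, rfl⟩]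
  exact ⟨hhole, by rw [fundLoop, ← hhole, hfr]⟩

theorem stmt_19_general (f : ℂ → ℂ) (R : ℝ) (hf : TranscEntire f)
    (hM : ∀ r ≥ R, r < maxMod f r) (hweb : SpidersWeb (levelSet f R 0))
    (L : ℤ) (G : Set ℂ) (hG : IsCompOf G (levelSet f R L)ᶜ) :
    ∃ N : ℕ, ∀ n : ℕ, N ≤ n → 0 ≤ (n : ℤ) + L ∧
      f^[n] '' G = fundHole f R ((n : ℤ) + L) ∧
      f^[n] '' frontier G = fundLoop f R ((n : ℤ) + L) := by
  have hnc := hf.not_const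
  obtain ⟨hd, -⟩ := hf
  obtain ⟨z, hz, rfl⟩ := hG
  obtain ⟨N, hN⟩ := exists_forall_norm_iterate_lt hd hnc hz
  refine ⟨N, fun n hn => ?_⟩
  obtain ⟨hnL, hlt⟩ := hN n hn
  exact ⟨hnL, image_iterate_connectedComponentIn_compl_levelSet hd hnc hz
    (isBounded_connectedComponentIn_compl_levelSet hd hnc hM hweb L z) hnL hlt⟩

/-- for any component `G` of `A_R^L(f)ᶜ`, eventually
`f^n(G) = H_{n+L}` and `f^n(∂G) = L_{n+L}`. -/
theorem stmt_19 (f : ℂ → ℂ) (R : ℝ) (hf : TranscEntire f) (hR : 0 < R)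
    (hM : ∀ r ≥ R, r < maxMod f r) (hweb : SpidersWeb (levelSet f R 0))
    (L : ℤ) (G : Set ℂ) (hG : IsCompOf G (levelSet f R L)ᶜ) :
    ∃ N : ℕ, ∀ n : ℕ, N ≤ n → 0 ≤ (n : ℤ) + L ∧
      f^[n] '' G = fundHole f R ((n : ℤ) + L) ∧
      f^[n] '' frontier G = fundLoop f R ((n : ℤ) + L) :=
  stmt_19_general f R hf hM hweb L G hG
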